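/- With g = R ⋉ n and the embedding i : C(n,n)^R → C(g,g) as above, a cochain f ∈ C(n,n)^R is a cocycle for the Chevalley–Eilenberg differential of n if and only if i(f) is a cocycle for g. Consequently Z(g,g) ∩ i(C(n,n)^R) = i(Z(n,n)^R). -/

import Mathlib

/-!
Write each argument of a cochain on `g` as `x = y + r` with `y = π x ∈ n` and `r ∈ R`.
In `d(i f)(x)` the terms free of `r` add up to `d f (y)`; the terms quadratic in `r` vanish since
`⁅R, R⁆ ⊆ R = ker π`; and the terms linear in `r` are, for each `a`, the bracket `⁅r_a, f(…)⁆`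
against the pair terms `f(⁅r_a, y_p⁆, …)`, which cancel by `R`-invariance of `f`. Hence
`d(i f) = i(d f)` for invariant `f`, and `i` detects vanishing because `π` is the identity on `n`.
-/

open scoped BigOperators

section Defs

/-- Pair term of the Chevalley–Eilenberg differential (raw version). -/
def pairArgR {L : Type*} [LieRing L] :
    ∀ {k : ℕ}, ((Fin k → L) → L) → (Fin (k + 1) → L) → Fin (k + 1) → Fin (k + 1) → L
  | 0, _, _, _, _ => 0
  | (k + 1), f, x, i, j =>
    if h : (i : ℕ) < (j : ℕ) then
      f (Fin.cons ⁅x i, x j⁆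
        (fun l => x (j.succAbove
          ((⟨(i : ℕ), by have := j.isLt; omega⟩ : Fin (k + 1)).succAbove l))))
    else 0

/-- The Chevalley–Eilenberg differential with adjoint coefficients (raw version). -/
def ceD {L : Type*} [LieRing L] {k : ℕ} (f : (Fin k → L) → L) : (Fin (k + 1) → L) → L :=
  fun x =>
    (∑ i : Fin (k + 1), ((-1 : ℤ) ^ (i : ℕ)) • ⁅x i, f (x ∘ i.succAbove)⁆)
      + ∑ j : Fin (k + 1), ∑ i ∈ Finset.Iio j,
          ((-1 : ℤ) ^ ((i : ℕ) + (j : ℕ))) • pairArgR f x i j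

/-- Extension by zero `i(F)` of a cochain on `n` to a cochain on `g`, via the projection
`π : g → n` along `R`. -/
def iFunR {𝕂 g : Type*} [Field 𝕂] [LieRing g] [LieAlgebra 𝕂 g]
    (n : LieSubalgebra 𝕂 g) (π : g →ₗ[𝕂] n) {k : ℕ}
    (F : (Fin k → n) → n) : (Fin k → g) → g := fun x => (F (fun j => π (x j)) : g)

/-- `R`-invariance of a cochain on `n`. -/
def RInvt {𝕂 g : Type*} [Field 𝕂] [LieRing g] [LieAlgebra 𝕂 g]
    (R n : LieSubalgebra 𝕂 g) (hid : ∀ x : g, ∀ y ∈ n, ⁅x, y⁆ ∈ n) {k : ℕ}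
    (f : AlternatingMap 𝕂 n n (Fin k)) : Prop :=
  ∀ r ∈ R, ∀ x : Fin k → n,
    ⁅r, (f x : g)⁆ =
      ∑ i : Fin k, (f (Function.update x i ⟨⁅r, (x i : g)⁆, hid r (x i) (x i).2⟩) : g)

end Defs

namespace Fin

variable {M : Type*} [AddCommGroup M] {m : ℕ}

theorem sum_sum_succAbove_predAbove (G : Fin (m + 2) → Fin (m + 1) → M) :
    ∑ a : Fin (m + 2), ∑ l : Fin (m + 1), G (a.succAbove l) (l.predAbove a) = ∑ a, ∑ l, G a l := by
  have hinv : Function.Involutive fun p : Fin (m + 2) × Fin (m + 1) ↦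
      (p.1.succAbove p.2, p.2.predAbove p.1) := fun p ↦ by
    simp [succAbove_succAbove_predAbove, predAbove_predAbove_succAbove]
  simp only [← Fintype.sum_prod_type']
  exact Equiv.sum_comp (hinv.toPerm _) fun p : Fin (m + 2) × Fin (m + 1) ↦ G p.1 p.2

theorem succAbove_le_castSucc_predAbove_iff (a : Fin (m + 2)) (l : Fin (m + 1)) :
    a.succAbove l ≤ castSucc (l.predAbove a) ↔ castSucc l < a := by
  rcases lt_or_ge (castSucc l) a with h | h
  · simp only [succAbove_of_castSucc_lt _ _ h, predAbove_of_castSucc_lt _ _ h, h, iff_true,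
      le_def, val_castSucc, val_pred]
    rw [lt_def, val_castSucc] at h
    omega
  · simp only [succAbove_of_le_castSucc _ _ h, predAbove_of_le_castSucc _ _ h, iff_false, not_le,
      lt_def, val_castSucc, coe_castPred, val_succ, not_lt.mpr h]
    rw [le_def, val_castSucc] at h
    omega

/-- The swap `(a, l) ↦ (a.succAbove l, l.predAbove a)` is an involution that exchanges
`castSucc l < a` with `a ≤ castSucc l` and flips the sign `(-1) ^ (a + l)`. -/
theorem sum_sum_neg_one_pow_smul_eq (Φ : Fin (m + 2) → Fin (m + 1) → M) :
    ∑ a : Fin (m + 2), ∑ l : Fin (m + 1), (-1 : ℤ) ^ ((a : ℕ) + l) • Φ a l =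
      ∑ a : Fin (m + 2), ∑ l : Fin (m + 1), if castSucc l < a then
        (-1 : ℤ) ^ ((a : ℕ) + l) • (Φ a l - Φ (a.succAbove l) (l.predAbove a)) else 0 := by
  have hswap : ∑ a : Fin (m + 2), ∑ l : Fin (m + 1), (if castSucc l < a then
        (-1 : ℤ) ^ ((a : ℕ) + l) • Φ (a.succAbove l) (l.predAbove a) else 0) =
      ∑ a : Fin (m + 2), ∑ l : Fin (m + 1),
        if a ≤ castSucc l then -((-1 : ℤ) ^ ((a : ℕ) + l) • Φ a l) else 0 := by
    conv_rhs => rw [← sum_sum_succAbove_predAbove]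
    refine Finset.sum_congr rfl fun a _ ↦ Finset.sum_congr rfl fun l _ ↦ ?_
    simp only [succAbove_le_castSucc_predAbove_iff, neg_one_pow_succAbove_add_predAbove, neg_smul,
      neg_neg]
  have hsplit : ∀ a : Fin (m + 2), ∀ l : Fin (m + 1), (if castSucc l < a then
      (-1 : ℤ) ^ ((a : ℕ) + l) • (Φ a l - Φ (a.succAbove l) (l.predAbove a)) else 0) =
      (-1 : ℤ) ^ ((a : ℕ) + l) • Φ a l
        + (if a ≤ castSucc l then -((-1 : ℤ) ^ ((a : ℕ) + l) • Φ a l) else 0)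
        - (if castSucc l < a then
            (-1 : ℤ) ^ ((a : ℕ) + l) • Φ (a.succAbove l) (l.predAbove a) else 0) := by
    intro a l
    rcases lt_or_ge (castSucc l) a with h | h
    · simp [h, not_le.mpr h, smul_sub]
    · simp [h, not_lt.mpr h]
  simp only [hsplit, Finset.sum_sub_distrib, Finset.sum_add_distrib, hswap, add_sub_cancel_right]

end Fin

section Cochains

variable {L : Type*} [LieRing L] {m : ℕ}

theorem pairArgR_castSucc (F : (Fin (m + 1) → L) → L) (x : Fin (m + 2) → L) {a : Fin (m + 2)}
    {l : Fin (m + 1)} (h : l.castSucc < a) :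
    pairArgR F x l.castSucc a =
      F (Fin.cons ⁅x (a.succAbove l), x a⁆ (x ∘ a.succAbove ∘ l.succAbove)) := by
  rw [Fin.succAbove_of_castSucc_lt _ _ h, pairArgR,
    dif_pos (show ((l.castSucc : Fin (m + 2)) : ℕ) < a from h)]
  rfl

theorem ceD_succ (F : (Fin (m + 1) → L) → L) (x : Fin (m + 2) → L) :
    ceD F x = ∑ a : Fin (m + 2), (-1 : ℤ) ^ (a : ℕ) • ⁅x a, F (x ∘ a.succAbove)⁆ +
      ∑ a : Fin (m + 2), ∑ l : Fin (m + 1), if l.castSucc < a then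
        (-1 : ℤ) ^ ((a : ℕ) + l) •
          F (Fin.cons ⁅x (a.succAbove l), x a⁆ (x ∘ a.succAbove ∘ l.succAbove)) else 0 := by
  rw [ceD]
  congr 1
  refine Finset.sum_congr rfl fun a _ ↦ ?_
  rw [← Finset.filter_gt_eq_Iio, Finset.sum_filter, Fin.sum_univ_castSucc,
    if_neg (not_lt.mpr (Fin.le_last a)), add_zero]
  refine Finset.sum_congr rfl fun l _ ↦ ?_
  split_ifs with h
  · rw [pairArgR_castSucc F x h, Fin.val_castSucc, add_comm]
  · rfl

end Cochains

theorem AlternatingMap.map_cons_add_sub {R M N : Type*} [CommRing R] [AddCommGroup M] [Module R M]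
    [AddCommGroup N] [Module R N] {m : ℕ} (f : AlternatingMap R M N (Fin (m + 1)))
    (a b c : M) (t : Fin m → M) :
    f (Fin.cons (a + b - c) t) = f (Fin.cons a t) + f (Fin.cons b t) - f (Fin.cons c t) := by
  have hlin : ∀ z, f (Fin.cons z t) = f.toMultilinearMap.toLinearMap (Fin.cons 0 t) 0 z := by
    simp [MultilinearMap.toLinearMap_apply, Fin.update_cons_zero]
  simp only [hlin, map_add, map_sub]

section Semidirect

variable {𝕂 g : Type*} [Field 𝕂] [LieRing g] [LieAlgebra 𝕂 g] {R n : LieSubalgebra 𝕂 g}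
  {π : g →ₗ[𝕂] n}

theorem sub_proj_mem_of_isCompl (hcompl : IsCompl R.toSubmodule n.toSubmodule)
    (hπn : ∀ y : n, π (y : g) = y) (hπR : ∀ r ∈ R, π r = 0) (z : g) : z - π z ∈ R := by
  obtain ⟨r, hr, v, hv, rfl⟩ :=
    Submodule.mem_sup.mp (hcompl.sup_eq_top ▸ Submodule.mem_top (x := z))
  have : π (r + v) = ⟨v, hv⟩ := by rw [map_add, hπR r hr, zero_add]; exact hπn ⟨v, hv⟩
  rw [this, add_sub_cancel_right]
  exact hr

theorem proj_coe_add_of_mem (hπn : ∀ y : n, π (y : g) = y) (hπR : ∀ r ∈ R, π r = 0) (y : n) {r : g}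
    (hr : r ∈ R) : π (y + r) = y := by
  rw [map_add, hπn, hπR r hr, add_zero]

theorem proj_lie_of_mem (hid : ∀ x : g, ∀ y ∈ n, ⁅x, y⁆ ∈ n) (hπn : ∀ y : n, π (y : g) = y)
    (hπR : ∀ r ∈ R, π r = 0) (u v : n) {r s : g} (hr : r ∈ R) (hs : s ∈ R) :
    π ⁅(u : g) + r, (v : g) + s⁆ =
      ⁅u, v⁆ + ⟨⁅r, (v : g)⁆, hid r v v.2⟩ - ⟨⁅s, (u : g)⁆, hid s u u.2⟩ := by
  have hRR : π ⁅r, s⁆ = 0 := hπR _ (R.lie_mem hr hs)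
  have hnn : π ⁅(u : g), (v : g)⁆ = ⁅u, v⁆ := by rw [← LieSubalgebra.coe_bracket, hπn]
  have hRn : ∀ (r : g) (v : n), π ⁅r, (v : g)⁆ = ⟨⁅r, (v : g)⁆, hid r v v.2⟩ := fun r v ↦
    hπn ⟨_, hid r v v.2⟩
  rw [add_lie, lie_add, lie_add, ← lie_skew (u : g) s, map_add, map_add, map_add, map_neg, hRR,
    hnn, hRn, hRn]
  abel

theorem iFunR_cons_lie (hid : ∀ x : g, ∀ y ∈ n, ⁅x, y⁆ ∈ n) (hπn : ∀ y : n, π (y : g) = y)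
    (hπR : ∀ r ∈ R, π r = 0) {m : ℕ} (f : AlternatingMap 𝕂 n n (Fin (m + 1))) (u v : n)
    {r s : g} (hr : r ∈ R) (hs : s ∈ R) {w : Fin m → g} {z : Fin m → n}
    (hw : ∀ t, π (w t) = z t) :
    iFunR n π f (Fin.cons ⁅(u : g) + r, (v : g) + s⁆ w) =
      (f (Fin.cons ⁅u, v⁆ z) : g) + (f (Fin.cons ⟨⁅r, (v : g)⁆, hid r v v.2⟩ z) : g) -
        (f (Fin.cons ⟨⁅s, (u : g)⁆, hid s u u.2⟩ z) : g) := by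
  show ((f (π ∘ Fin.cons _ _) : n) : g) = _
  rw [Fin.comp_cons, show π ∘ w = z from funext hw, proj_lie_of_mem hid hπn hπR _ _ hr hs,
    AlternatingMap.map_cons_add_sub]
  push_cast
  rfl

theorem RInvt.lie_eq_sum {hid : ∀ x : g, ∀ y ∈ n, ⁅x, y⁆ ∈ n} {m : ℕ}
    {f : AlternatingMap 𝕂 n n (Fin (m + 1))} (hf : RInvt R n hid f) {r : g} (hr : r ∈ R)
    (z : Fin (m + 1) → n) :
    ⁅r, (f z : g)⁆ = ∑ l : Fin (m + 1), (-1 : ℤ) ^ (l : ℕ) •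
      (f (Fin.cons ⟨⁅r, (z l : g)⁆, hid r _ (z l).2⟩ (z ∘ l.succAbove)) : g) := by
  rw [hf r hr z]
  refine Finset.sum_congr rfl fun l _ ↦ ?_
  rw [← Fin.insertNth_removeNth, AlternatingMap.map_insertNth]
  push_cast
  rfl

theorem RInvt.sum_neg_one_pow_smul_lie_eq {hid : ∀ x : g, ∀ y ∈ n, ⁅x, y⁆ ∈ n} {m : ℕ}
    {f : AlternatingMap 𝕂 n n (Fin (m + 1))} (hf : RInvt R n hid f) {r : Fin (m + 2) → g}
    (hr : ∀ a, r a ∈ R) (y : Fin (m + 2) → n) :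
    ∑ a : Fin (m + 2), (-1 : ℤ) ^ (a : ℕ) • ⁅r a, (f (y ∘ a.succAbove) : g)⁆ =
      ∑ a : Fin (m + 2), ∑ l : Fin (m + 1), if l.castSucc < a then (-1 : ℤ) ^ ((a : ℕ) + l) •
        ((f (Fin.cons ⟨⁅r a, (y (a.succAbove l) : g)⁆, hid _ _ (y _).2⟩
            (y ∘ a.succAbove ∘ l.succAbove)) : g) -
          (f (Fin.cons ⟨⁅r (a.succAbove l), (y a : g)⁆, hid _ _ (y a).2⟩
            (y ∘ a.succAbove ∘ l.succAbove)) : g)) else 0 := by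
  have htail : ∀ (a : Fin (m + 2)) (l : Fin (m + 1)),
      y ∘ (a.succAbove l).succAbove ∘ (l.predAbove a).succAbove = y ∘ a.succAbove ∘ l.succAbove :=
    fun a l ↦
    funext fun t ↦ congrArg y (Fin.succAbove_succAbove_succAbove_predAbove a l t)
  calc _ = ∑ a : Fin (m + 2), ∑ l : Fin (m + 1), (-1 : ℤ) ^ ((a : ℕ) + l) •
        (f (Fin.cons ⟨⁅r a, (y (a.succAbove l) : g)⁆, hid _ _ (y _).2⟩
          (y ∘ a.succAbove ∘ l.succAbove)) : g) := by
        refine Finset.sum_congr rfl fun a _ ↦ ?_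
        rw [hf.lie_eq_sum (hr a), Finset.smul_sum]
        simp only [smul_smul, ← pow_add]
        rfl
    _ = _ := by
        rw [Fin.sum_sum_neg_one_pow_smul_eq]
        simp only [Fin.succAbove_succAbove_predAbove, htail]

theorem ceD_iFunR_coe_add {hid : ∀ x : g, ∀ y ∈ n, ⁅x, y⁆ ∈ n} (hπn : ∀ y : n, π (y : g) = y)
    (hπR : ∀ r ∈ R, π r = 0) {k : ℕ} {f : AlternatingMap 𝕂 n n (Fin k)} (hf : RInvt R n hid f)
    (y : Fin (k + 1) → n) {r : Fin (k + 1) → g} (hr : ∀ a, r a ∈ R) :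
    ceD (iFunR n π f) (fun a ↦ (y a : g) + r a) = ceD f y := by
  set x : Fin (k + 1) → g := fun a ↦ (y a : g) + r a
  have hxπ : ∀ a, π (x a) = y a := fun a ↦ proj_coe_add_of_mem hπn hπR (y a) (hr a)
  have hsingle : ∀ a, ⁅x a, iFunR n π f (x ∘ a.succAbove)⁆ =
      ((⁅y a, f (y ∘ a.succAbove)⁆ : n) : g) + ⁅r a, (f (y ∘ a.succAbove) : g)⁆ := by
    intro a
    rw [LieSubalgebra.coe_bracket, ← add_lie]
    simp only [iFunR, Function.comp_apply, hxπ]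
    rfl
  cases k with
  | zero =>
    have hR : ∀ a, ⁅r a, (f (y ∘ a.succAbove) : g)⁆ = 0 := fun a ↦ by
      simpa using hf (r a) (hr a) (y ∘ a.succAbove)
    simp [ceD, pairArgR, hsingle, hR]
  | succ m =>
    have hpair : ∀ a l, iFunR n π f (Fin.cons ⁅x (a.succAbove l), x a⁆
        (x ∘ a.succAbove ∘ l.succAbove)) =
        (f (Fin.cons ⁅y (a.succAbove l), y a⁆ (y ∘ a.succAbove ∘ l.succAbove)) : g) +
          (f (Fin.cons ⟨⁅r (a.succAbove l), (y a : g)⁆, hid _ _ (y a).2⟩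
            (y ∘ a.succAbove ∘ l.succAbove)) : g) -
          (f (Fin.cons ⟨⁅r a, (y (a.succAbove l) : g)⁆, hid _ _ (y _).2⟩
            (y ∘ a.succAbove ∘ l.succAbove)) : g) := fun a l ↦
      iFunR_cons_lie hid hπn hπR f _ _ (hr _) (hr _) fun t ↦ hxπ _
    rw [ceD_succ, ceD_succ]
    simp only [hsingle, hpair, smul_add, Finset.sum_add_distrib, hf.sum_neg_one_pow_smul_lie_eq hr]
    push_cast [apply_ite Subtype.val]
    rw [add_assoc]
    congr 1
    simp only [← Finset.sum_add_distrib]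
    refine Finset.sum_congr rfl fun a _ ↦ Finset.sum_congr rfl fun l _ ↦ ?_
    split_ifs
    · rw [← smul_add]
      congr 1
      abel
    · rw [add_zero]

theorem iFunR_eq_zero_iff (hπn : ∀ y : n, π (y : g) = y) {k : ℕ}
    (F : (Fin k → n) → n) : (∀ x, iFunR n π F x = 0) ↔ ∀ y, F y = 0 := by
  refine ⟨fun h y ↦ ?_, fun h x ↦ by simp [iFunR, h]⟩
  have := h fun j ↦ y j
  simp only [iFunR, hπn] at this
  exact_mod_cast this

theorem ceD_iFunR {hid : ∀ x : g, ∀ y ∈ n, ⁅x, y⁆ ∈ n}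
    (hcompl : IsCompl R.toSubmodule n.toSubmodule) (hπn : ∀ y : n, π (y : g) = y)
    (hπR : ∀ r ∈ R, π r = 0) {k : ℕ} {f : AlternatingMap 𝕂 n n (Fin k)} (hf : RInvt R n hid f) :
    ceD (iFunR n π f) = iFunR n π (ceD f) := by
  funext x
  have hx : x = fun a ↦ ((π (x a) : n) : g) + (x a - π (x a)) :=
    funext fun a ↦ (add_sub_cancel _ _).symm
  conv_lhs => rw [hx]
  exact ceD_iFunR_coe_add hπn hπR hf _ fun a ↦ sub_proj_mem_of_isCompl hcompl hπn hπR (x a)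

end Semidirect

theorem iMap_cocycle_iff_and_trace_general
    {𝕂 g : Type*} [Field 𝕂] [LieRing g] [LieAlgebra 𝕂 g]
    (R n : LieSubalgebra 𝕂 g)
    (hid : ∀ x : g, ∀ y ∈ n, ⁅x, y⁆ ∈ n)
    (hcompl : IsCompl R.toSubmodule n.toSubmodule)
    (π : g →ₗ[𝕂] n)
    (hπn : ∀ y : n, π (y : g) = y)
    (hπR : ∀ r ∈ R, π r = 0)
    (k : ℕ) :
    (∀ f : AlternatingMap 𝕂 n n (Fin k), RInvt R n hid f →
        ((∀ x : Fin (k + 1) → n, ceD ⇑f x = 0) ↔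
          ∀ x : Fin (k + 1) → g, ceD (iFunR n π ⇑f) x = 0)) ∧
    ({F : (Fin k → g) → g | ∀ x, ceD F x = 0} ∩
        ((fun f : AlternatingMap 𝕂 n n (Fin k) => iFunR n π ⇑f) ''
          {f | RInvt R n hid f}) =
      (fun f : AlternatingMap 𝕂 n n (Fin k) => iFunR n π ⇑f) ''
        {f | RInvt R n hid f ∧ ∀ x, ceD ⇑f x = 0}) := by
  have hcocycle : ∀ f : AlternatingMap 𝕂 n n (Fin k), RInvt R n hid f →
      ((∀ x, ceD ⇑f x = 0) ↔ ∀ x, ceD (iFunR n π ⇑f) x = 0) := fun f hf ↦ by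
    rw [ceD_iFunR hcompl hπn hπR hf, iFunR_eq_zero_iff hπn]
  refine ⟨hcocycle, ?_⟩
  rw [Set.inter_comm, ← Set.image_inter_preimage]
  congr 1
  ext f
  exact and_congr_right fun hf ↦ (hcocycle f hf).symm

/-- For `g = R ⋉ n`, an `R`-invariant cochain `f ∈ C(n,n)^R` is a cocycle
(for the Chevalley–Eilenberg differential of `n`) if and only if `i(f)` is a cocycle for `g`;
consequently `Z(g,g) ∩ i(C(n,n)^R) = i(Z(n,n)^R)`. -/
theorem iMap_cocycle_iff_and_trace
    {𝕂 g : Type*} [Field 𝕂] [CharZero 𝕂] [LieRing g] [LieAlgebra 𝕂 g]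
    (R n : LieSubalgebra 𝕂 g)
    (hid : ∀ x : g, ∀ y ∈ n, ⁅x, y⁆ ∈ n)
    (hcompl : IsCompl R.toSubmodule n.toSubmodule)
    (π : g →ₗ[𝕂] n)
    (hπn : ∀ y : n, π (y : g) = y)
    (hπR : ∀ r ∈ R, π r = 0)
    (k : ℕ) :
    (∀ f : AlternatingMap 𝕂 n n (Fin k), RInvt R n hid f →
        ((∀ x : Fin (k + 1) → n, ceD ⇑f x = 0) ↔
          ∀ x : Fin (k + 1) → g, ceD (iFunR n π ⇑f) x = 0)) ∧
    ({F : (Fin k → g) → g | ∀ x, ceD F x = 0} ∩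
        ((fun f : AlternatingMap 𝕂 n n (Fin k) => iFunR n π ⇑f) ''
          {f | RInvt R n hid f}) =
      (fun f : AlternatingMap 𝕂 n n (Fin k) => iFunR n π ⇑f) ''
        {f | RInvt R n hid f ∧ ∀ x, ceD ⇑f x = 0}) :=
  iMap_cocycle_iff_and_trace_general R n hid hcompl π hπn hπR k
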